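/- Writing m₂ = ∫_{-2}^{2} (x³ − 3x)² · √(4 − x²)/(2π) dx and m₄ = ∫_{-2}^{2} (x³ − 3x)⁴ · √(4 − x²)/(2π) dx, one has m₄ − 2·m₂² = −2; in particular m₄ − 2·m₂² < 0. -/

import Mathlib

/-!
The even moments `M (2k) = ∫_{-2}^{2} x^(2k) √(4 - x²) dx` are `2π` times the Catalan numbers:
`M 0 = 2π`, and integrating the derivative of `x^(n+1) (4 - x²)^(3/2)`, which vanishes at `± 2`,
gives `(n + 4) M (n + 2) = 4 (n + 1) M n`, the Catalan recurrence. Since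
`(x³ - 3x)² = x⁶ - 6x⁴ + 9x²` and `(x³ - 3x)⁴ = x¹² - 12x¹⁰ + 54x⁸ - 108x⁶ + 81x⁴`, this gives
`m₂ = 5 - 12 + 9 = 2` and `m₄ = 132 - 504 + 756 - 540 + 162 = 6`.
-/

open Real intervalIntegral Set

theorem add_two_mul_catalan_succ (n : ℕ) :
    (n + 2) * catalan (n + 1) = 2 * (2 * n + 1) * catalan n := by
  apply Nat.eq_of_mul_eq_mul_left n.succ_pos
  calc (n + 1) * ((n + 2) * catalan (n + 1))
      = (n + 1) * ((n + 1 + 1) * catalan (n + 1)) := rfl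
    _ = (n + 1) * (n + 1).centralBinom := by rw [succ_mul_catalan_eq_centralBinom]
    _ = 2 * (2 * n + 1) * ((n + 1) * catalan n) := by
      rw [Nat.succ_mul_centralBinom_succ, succ_mul_catalan_eq_centralBinom]
    _ = (n + 1) * (2 * (2 * n + 1) * catalan n) := by ring

theorem hasDerivAt_sqrt_four_sub_sq {x : ℝ} (hx : x ∈ Ioo (-2 : ℝ) 2) :
    HasDerivAt (fun y => √(4 - y ^ 2)) (-x / √(4 - x ^ 2)) x := by
  have hpos : 0 < 4 - x ^ 2 := by nlinarith [hx.1, hx.2]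
  convert ((hasDerivAt_pow 2 x).const_sub 4).sqrt hpos.ne' using 1
  field_simp
  ring

theorem integral_pow_add_two_mul_sqrt_four_sub_sq (n : ℕ) :
    (n + 4 : ℝ) * ∫ x in (-2 : ℝ)..2, x ^ (n + 2) * √(4 - x ^ 2) =
      4 * (n + 1) * ∫ x in (-2 : ℝ)..2, x ^ n * √(4 - x ^ 2) := by
  have hint : ∀ m : ℕ,
      IntervalIntegrable (fun x : ℝ => x ^ m * √(4 - x ^ 2)) MeasureTheory.volume (-2) 2 :=
    fun m => (by fun_prop : Continuous _).intervalIntegrable _ _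
  have hFTC : ∫ x in (-2 : ℝ)..2,
      (4 * (n + 1) * (x ^ n * √(4 - x ^ 2)) - (n + 4) * (x ^ (n + 2) * √(4 - x ^ 2))) = 0 := by
    rw [integral_eq_sub_of_hasDerivAt_of_le
      (f := fun x => x ^ (n + 1) * (4 - x ^ 2) * √(4 - x ^ 2)) (by norm_num) (by fun_prop) ?_
      (((hint n).const_mul _).sub ((hint _).const_mul _))]
    · norm_num
    · intro x hx
      have hpos : 0 < 4 - x ^ 2 := by nlinarith [hx.1, hx.2]
      have hs : √(4 - x ^ 2) ^ 2 = 4 - x ^ 2 := sq_sqrt hpos.le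
      refine (((hasDerivAt_pow (n + 1) x).mul ((hasDerivAt_pow 2 x).const_sub 4)).mul
        (hasDerivAt_sqrt_four_sub_sq hx)).congr_deriv ?_
      simp only [Pi.mul_apply]
      field_simp
      push_cast
      linear_combination x ^ (n + 2) * hs
  rw [integral_sub ((hint n).const_mul _) ((hint _).const_mul _), integral_const_mul,
    integral_const_mul] at hFTC
  linarith

theorem integral_sqrt_four_sub_sq : ∫ x in (-2 : ℝ)..2, √(4 - x ^ 2) = 2 * π := by
  have hscale : ∀ x : ℝ, √(4 - (2 * x) ^ 2) = 2 * √(1 - x ^ 2) := fun x => by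
    rw [show 4 - (2 * x) ^ 2 = 2 ^ 2 * (1 - x ^ 2) by ring, sqrt_mul (by norm_num),
      sqrt_sq (by norm_num)]
  calc ∫ x in (-2 : ℝ)..2, √(4 - x ^ 2)
      = 2 * ∫ x in (-1 : ℝ)..1, √(4 - (2 * x) ^ 2) := by
        rw [mul_integral_comp_mul_left (f := fun x => √(4 - x ^ 2))]; norm_num
    _ = 2 * π := by simp only [hscale, integral_const_mul, integral_sqrt_one_sub_sq]; ring

theorem integral_even_pow_mul_sqrt_four_sub_sq (k : ℕ) :
    ∫ x in (-2 : ℝ)..2, x ^ (2 * k) * √(4 - x ^ 2) = 2 * π * catalan k := by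
  induction k with
  | zero => simpa using integral_sqrt_four_sub_sq
  | succ k ih =>
    have hrec := integral_pow_add_two_mul_sqrt_four_sub_sq (2 * k)
    have hcat : ((k + 2) * catalan (k + 1) : ℝ) = 2 * (2 * k + 1) * catalan k := by
      exact_mod_cast add_two_mul_catalan_succ k
    rw [ih] at hrec
    apply mul_left_cancel₀ (show (2 * k + 4 : ℝ) ≠ 0 by positivity)
    rw [show 2 * (k + 1) = 2 * k + 2 by ring]
    push_cast at hrec ⊢
    linear_combination hrec - 4 * π * hcat

theorem integral_even_pow_mul_semicircle (k : ℕ) :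
    ∫ x in (-2 : ℝ)..2, x ^ (2 * k) * (√(4 - x ^ 2) / (2 * π)) = catalan k := by
  simp_rw [← mul_div_assoc]
  rw [integral_div, integral_even_pow_mul_sqrt_four_sub_sq]
  field_simp

theorem integral_even_poly_mul_semicircle {m : ℕ} (c : Fin m → ℝ) :
    ∫ x in (-2 : ℝ)..2, (∑ i, c i * x ^ (2 * (i : ℕ))) * (√(4 - x ^ 2) / (2 * π)) =
      ∑ i, c i * catalan i := by
  simp_rw [Finset.sum_mul, mul_assoc]
  rw [integral_finsetSum fun i _ => (by fun_prop : Continuous _).intervalIntegrable _ _]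
  simp only [integral_const_mul, integral_even_pow_mul_semicircle]

/-- For `m₂`, `m₄` the second and fourth moments of `x ↦ x³ − 3x` under the standard
semicircular distribution, the fourth free cumulant `m₄ − 2·m₂²` equals `−2`;
in particular it is negative. -/
theorem fourth_free_cumulant_of_cubic_minus_linear :
    ((∫ x in (-2 : ℝ)..2, (x ^ 3 - 3 * x) ^ 4 * (Real.sqrt (4 - x ^ 2) / (2 * Real.pi))) -
      2 * (∫ x in (-2 : ℝ)..2, (x ^ 3 - 3 * x) ^ 2 * (Real.sqrt (4 - x ^ 2) / (2 * Real.pi))) ^ 2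
      = -2) ∧
    ((∫ x in (-2 : ℝ)..2, (x ^ 3 - 3 * x) ^ 4 * (Real.sqrt (4 - x ^ 2) / (2 * Real.pi))) -
      2 * (∫ x in (-2 : ℝ)..2, (x ^ 3 - 3 * x) ^ 2 * (Real.sqrt (4 - x ^ 2) / (2 * Real.pi))) ^ 2
      < 0) := by
  have hcat : catalan 4 = 14 ∧ catalan 5 = 42 ∧ catalan 6 = 132 := by
    norm_num [catalan_eq_centralBinom_div, Nat.centralBinom, Nat.choose]
  have m₂ : ∫ x in (-2 : ℝ)..2, (x ^ 3 - 3 * x) ^ 2 * (√(4 - x ^ 2) / (2 * π)) = 2 := by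
    calc _ = ∫ x in (-2 : ℝ)..2,
          (∑ i, ![0, 9, -6, 1] i * x ^ (2 * (i : ℕ))) * (√(4 - x ^ 2) / (2 * π)) :=
          integral_congr fun x _ => by congr 1; simp [Fin.sum_univ_succ]; ring
      _ = 2 := by
        rw [integral_even_poly_mul_semicircle]
        simp [Fin.sum_univ_succ, catalan_two, catalan_three]
        norm_num
  have m₄ : ∫ x in (-2 : ℝ)..2, (x ^ 3 - 3 * x) ^ 4 * (√(4 - x ^ 2) / (2 * π)) = 6 := by
    calc _ = ∫ x in (-2 : ℝ)..2,
          (∑ i, ![0, 0, 81, -108, 54, -12, 1] i * x ^ (2 * (i : ℕ))) * (√(4 - x ^ 2) / (2 * π)) :=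
          integral_congr fun x _ => by congr 1; simp [Fin.sum_univ_succ]; ring
      _ = 6 := by
        rw [integral_even_poly_mul_semicircle]
        simp [Fin.sum_univ_succ, catalan_two, catalan_three, hcat]
        norm_num
  rw [m₂, m₄]
  norm_num
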